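/- Assume δ₂ ≤ δ₁ and let λ be a complex number with |λ| different from e^{δ₁} and from e^{δ₂}. Then for every positive integer m the operator (T − λI)^m : ℓ²_{δ₁,δ₂} → ℓ²_{δ₁,δ₂} is surjective. -/

import Mathlib

noncomputable section

namespace WeightedL2

/-- The weight `w k = e^{δ₁ k}` for `k ≤ 0` and `e^{δ₂ k}` for `k > 0`. -/
def w (δ₁ δ₂ : ℝ) (k : ℤ) : ℝ :=
  if k ≤ 0 then Real.exp (δ₁ * k) else Real.exp (δ₂ * k)

lemma w_pos (δ₁ δ₂ : ℝ) (k : ℤ) : 0 < w δ₁ δ₂ k := by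
  unfold w; split <;> exact Real.exp_pos _

/-- Multiplication by the weight, as a linear endomorphism of the space of
two-sided complex sequences. -/
def wmul (δ₁ δ₂ : ℝ) : (ℤ → ℂ) →ₗ[ℂ] (ℤ → ℂ) where
  toFun x := fun k => (w δ₁ δ₂ k : ℂ) * x k
  map_add' x y := by funext k; simp [mul_add]
  map_smul' c x := by funext k; simp [Pi.smul_apply, smul_eq_mul]; ring

/-- The weighted Hilbert space `ℓ²_{δ₁,δ₂}`, consisting of two-sided complex
sequences `x` with `∑_{k ≤ 0} e^{2δ₁ k} |x_k|² < ∞` and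
`∑_{k > 0} e^{2δ₂ k} |x_k|² < ∞`, viewed as a subspace of `ℤ → ℂ`. -/
def space (δ₁ δ₂ : ℝ) : Submodule ℂ (ℤ → ℂ) where
  carrier := {x | Memℓp (wmul δ₁ δ₂ x) 2}
  add_mem' {x y} hx hy := by simpa [map_add] using hx.add hy
  zero_mem' := by simpa [map_zero] using zero_memℓp (E := fun _ : ℤ => ℂ) (p := 2)
  smul_mem' c x hx := by simpa [map_smul] using hx.const_smul c

/-- The canonical weighting isomorphism of `ℓ²_{δ₁,δ₂}` onto `ℓ²`. -/
def toLp (δ₁ δ₂ : ℝ) : space δ₁ δ₂ →ₗ[ℂ] lp (fun _ : ℤ => ℂ) 2 where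
  toFun x := ⟨wmul δ₁ δ₂ x.1, x.2⟩
  map_add' x y := by ext k; simp [map_add] <;> rfl
  map_smul' c x := by ext k; simp [map_smul]

lemma toLp_injective (δ₁ δ₂ : ℝ) : Function.Injective (toLp δ₁ δ₂) := by
  intro x y hxy
  ext k
  have h : (w δ₁ δ₂ k : ℂ) * x.1 k = (w δ₁ δ₂ k : ℂ) * y.1 k :=
    congrFun (congrArg Subtype.val hxy) k
  have hw : (w δ₁ δ₂ k : ℂ) ≠ 0 := by
    exact_mod_cast (w_pos δ₁ δ₂ k).ne'
  exact mul_left_cancel₀ hw h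

/-- The norm on `ℓ²_{δ₁,δ₂}`:
`‖x‖² = ∑_{k ≤ 0} e^{2δ₁ k}|x_k|² + ∑_{k > 0} e^{2δ₂ k}|x_k|²`. -/
instance (δ₁ δ₂ : ℝ) : NormedAddCommGroup (space δ₁ δ₂) :=
  NormedAddCommGroup.induced _ _ (toLp δ₁ δ₂) (toLp_injective δ₁ δ₂)

instance (δ₁ δ₂ : ℝ) : NormedSpace ℂ (space δ₁ δ₂) :=
  NormedSpace.induced ℂ _ _ (toLp δ₁ δ₂)

end WeightedL2


-- ### Auxiliary development


namespace Helper

open scoped ENNReal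

abbrev L2Z := lp (fun _ : ℤ => ℂ) 2

lemma summable_sq (g : L2Z) : Summable (fun k : ℤ => ‖g k‖ ^ 2) := by
  have h := Memℓp.summable (p := 2) (by norm_num) (lp.memℓp g)
  simpa [Real.rpow_two] using h

lemma norm_sq_eq (g : L2Z) : ‖g‖ ^ 2 = ∑' k : ℤ, ‖g k‖ ^ 2 := by
  have h := lp.norm_rpow_eq_tsum (p := 2) (by norm_num) g
  simpa [Real.rpow_two] using h

set_option maxHeartbeats 1000000 in
lemma memℓp_of_le {f : ℤ → ℂ} (g : L2Z) (c : ℝ) (n : ℤ)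
    (h : ∀ k, ‖f k‖ ≤ c * ‖g (k + n)‖) : Memℓp f 2 := by
  apply memℓp_gen
  have h1 : Summable (fun k : ℤ => c ^ 2 * ‖g k‖ ^ 2) := (summable_sq g).mul_left _
  have h2 : Summable (fun k : ℤ => c ^ 2 * ‖g (k + n)‖ ^ 2) :=
    ((Equiv.addRight n).summable_iff.2 h1)
  have h3 : Summable (fun k : ℤ => ‖f k‖ ^ 2) := by
    apply h2.of_nonneg_of_le (fun k => by positivity)
    intro k
    calc ‖f k‖ ^ 2 ≤ (c * ‖g (k + n)‖) ^ 2 := by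
          exact pow_le_pow_left₀ (norm_nonneg _) (h k) 2
      _ = c ^ 2 * ‖g (k + n)‖ ^ 2 := by ring
  simpa [Real.rpow_two] using h3

lemma norm_le_of_le (f g : L2Z) (c : ℝ) (hc : 0 ≤ c) (n : ℤ)
    (h : ∀ k, ‖f k‖ ≤ c * ‖g (k + n)‖) : ‖f‖ ≤ c * ‖g‖ := by
  have key : ‖f‖ ^ 2 ≤ (c * ‖g‖) ^ 2 := by
    rw [norm_sq_eq]
    have h1 : Summable (fun k : ℤ => (c * ‖g (k + n)‖) ^ 2) := by
      have h1' : Summable (fun k : ℤ => c ^ 2 * ‖g k‖ ^ 2) := (summable_sq g).mul_left _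
      have := (Equiv.addRight n).summable_iff.2 h1'
      apply this.congr
      intro k; simp [Equiv.addRight]; ring
    have hf : Summable (fun k : ℤ => ‖f k‖ ^ 2) := by
      apply h1.of_nonneg_of_le (fun k => by positivity)
      exact fun k => pow_le_pow_left₀ (norm_nonneg _) (h k) 2
    calc ∑' k : ℤ, ‖f k‖ ^ 2 ≤ ∑' k : ℤ, (c * ‖g (k + n)‖) ^ 2 :=
          Summable.tsum_le_tsum (fun k => pow_le_pow_left₀ (norm_nonneg _) (h k) 2) hf h1
      _ = ∑' k : ℤ, c ^ 2 * ‖g (k + n)‖ ^ 2 := by congr 1; funext k; ring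
      _ = c ^ 2 * ∑' k : ℤ, ‖g (k + n)‖ ^ 2 := tsum_mul_left
      _ = c ^ 2 * ∑' k : ℤ, ‖g k‖ ^ 2 := by
          congr 1
          exact (Equiv.addRight n).tsum_eq (fun k => ‖g k‖ ^ 2)
      _ = (c * ‖g‖) ^ 2 := by rw [mul_pow, ← norm_sq_eq g]
  exact le_of_pow_le_pow_left₀ (by norm_num) (by positivity) key

end Helper
namespace Helper

variable (δ₁ δ₂ : ℝ)

/-- ratio `w k / w (k-1)` -/
def cc (k : ℤ) : ℝ := if k ≤ 0 then Real.exp δ₁ else Real.exp δ₂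

/-- ratio `w k / w (k+1)` -/
def dd (k : ℤ) : ℝ := if k ≤ -1 then Real.exp (-δ₁) else Real.exp (-δ₂)

lemma cc_pos (k : ℤ) : 0 < cc δ₁ δ₂ k := by unfold cc; split <;> exact Real.exp_pos _

lemma dd_pos (k : ℤ) : 0 < dd δ₁ δ₂ k := by unfold dd; split <;> exact Real.exp_pos _

variable {δ₁ δ₂ : ℝ}

lemma cc_le (hδ : δ₂ ≤ δ₁) (k : ℤ) : cc δ₁ δ₂ k ≤ Real.exp δ₁ := by
  unfold cc; split
  · exact le_refl _
  · exact Real.exp_le_exp.2 hδ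

lemma cc_of_pos {k : ℤ} (hk : 0 < k) : cc δ₁ δ₂ k = Real.exp δ₂ := by
  unfold cc; rw [if_neg (by omega)]

lemma dd_le (hδ : δ₂ ≤ δ₁) (k : ℤ) : dd δ₁ δ₂ k ≤ Real.exp (-δ₂) := by
  unfold dd; split
  · exact Real.exp_le_exp.2 (by linarith)
  · exact le_refl _

lemma dd_of_neg {k : ℤ} (hk : k ≤ -1) : dd δ₁ δ₂ k = Real.exp (-δ₁) := by
  unfold dd; rw [if_pos hk]

lemma cc_mul_dd (k : ℤ) : cc δ₁ δ₂ k * dd δ₁ δ₂ (k - 1) = 1 := by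
  unfold cc dd
  rcases le_or_gt k 0 with h | h
  · rw [if_pos h, if_pos (by omega), ← Real.exp_add]; simp
  · rw [if_neg (by omega), if_neg (by omega), ← Real.exp_add]; simp

/-- the weighted right-shift `(W z) k = cc k * z (k-1)` -/
def W (hδ : δ₂ ≤ δ₁) : L2Z →L[ℂ] L2Z :=
  LinearMap.mkContinuous
    { toFun := fun z => ⟨fun k => (cc δ₁ δ₂ k : ℂ) * z (k - 1),
        memℓp_of_le z (Real.exp δ₁) (-1) (fun k => by
          rw [norm_mul, Complex.norm_real, Real.norm_eq_abs,
            abs_of_pos (cc_pos δ₁ δ₂ k), show k + (-1) = k - 1 by ring]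
          exact mul_le_mul_of_nonneg_right (cc_le hδ k) (norm_nonneg _))⟩
      map_add' := fun z₁ z₂ => by
        apply Subtype.ext; funext k
        simp only [lp.coeFn_add, Pi.add_apply, mul_add]
      map_smul' := fun c z => by
        apply Subtype.ext; funext k
        simp [lp.coeFn_smul, Pi.smul_apply, smul_eq_mul]; ring }
    (Real.exp δ₁)
    (fun z => norm_le_of_le _ z (Real.exp δ₁) (Real.exp_pos _).le (-1) (fun k => by
      show ‖(cc δ₁ δ₂ k : ℂ) * z (k - 1)‖ ≤ _
      rw [norm_mul, Complex.norm_real, Real.norm_eq_abs,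
        abs_of_pos (cc_pos δ₁ δ₂ k), show k + (-1) = k - 1 by ring]
      exact mul_le_mul_of_nonneg_right (cc_le hδ k) (norm_nonneg _)))

lemma W_apply (hδ : δ₂ ≤ δ₁) (z : L2Z) (k : ℤ) :
    (W hδ z) k = (cc δ₁ δ₂ k : ℂ) * z (k - 1) := rfl

/-- the weighted left-shift `(S z) k = dd k * z (k+1)` -/
def S (hδ : δ₂ ≤ δ₁) : L2Z →L[ℂ] L2Z :=
  LinearMap.mkContinuous
    { toFun := fun z => ⟨fun k => (dd δ₁ δ₂ k : ℂ) * z (k + 1),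
        memℓp_of_le z (Real.exp (-δ₂)) 1 (fun k => by
          rw [norm_mul, Complex.norm_real, Real.norm_eq_abs,
            abs_of_pos (dd_pos δ₁ δ₂ k)]
          exact mul_le_mul_of_nonneg_right (dd_le hδ k) (norm_nonneg _))⟩
      map_add' := fun z₁ z₂ => by
        apply Subtype.ext; funext k
        simp only [lp.coeFn_add, Pi.add_apply, mul_add]
      map_smul' := fun c z => by
        apply Subtype.ext; funext k
        simp [lp.coeFn_smul, Pi.smul_apply, smul_eq_mul]; ring }
    (Real.exp (-δ₂))
    (fun z => norm_le_of_le _ z (Real.exp (-δ₂)) (Real.exp_pos _).le 1 (fun k => by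
      show ‖(dd δ₁ δ₂ k : ℂ) * z (k + 1)‖ ≤ _
      rw [norm_mul, Complex.norm_real, Real.norm_eq_abs,
        abs_of_pos (dd_pos δ₁ δ₂ k)]
      exact mul_le_mul_of_nonneg_right (dd_le hδ k) (norm_nonneg _)))

lemma S_apply (hδ : δ₂ ≤ δ₁) (z : L2Z) (k : ℤ) :
    (S hδ z) k = (dd δ₁ δ₂ k : ℂ) * z (k + 1) := rfl

lemma W_S (hδ : δ₂ ≤ δ₁) (z : L2Z) : W hδ (S hδ z) = z := by
  apply Subtype.ext; funext k
  rw [W_apply, S_apply]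
  rw [show k - 1 + 1 = k by ring, ← mul_assoc, ← Complex.ofReal_mul, cc_mul_dd]
  simp

/-- norm bound for W, general -/
lemma norm_W_le (hδ : δ₂ ≤ δ₁) (z : L2Z) : ‖W hδ z‖ ≤ Real.exp δ₁ * ‖z‖ :=
  LinearMap.mkContinuous_norm_le _ (Real.exp_pos _).le _ |>.trans (le_refl _) |>.trans
    (le_refl _) |> fun h => (W hδ).le_of_opNorm_le h z

/-- refined bound for W on sequences supported on `k > 0` -/
lemma W_bound_pos (hδ : δ₂ ≤ δ₁) (z : L2Z) (hz : ∀ k ≤ 0, z k = 0) :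
    (∀ k ≤ 0, (W hδ z) k = 0) ∧ ‖W hδ z‖ ≤ Real.exp δ₂ * ‖z‖ := by
  constructor
  · intro k hk
    rw [W_apply, hz (k - 1) (by omega), mul_zero]
  · apply norm_le_of_le _ z _ (Real.exp_pos _).le (-1)
    intro k
    rw [W_apply, show k + (-1) = k - 1 by ring]
    rcases le_or_gt k 0 with h | h
    · rw [hz (k - 1) (by omega)]
      simp [mul_nonneg (Real.exp_pos δ₂).le (norm_nonneg _)]
    · rw [norm_mul, Complex.norm_real, Real.norm_eq_abs, abs_of_pos (cc_pos δ₁ δ₂ k),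
        cc_of_pos h]

/-- refined bound for S on sequences supported on `k ≤ 0` -/
lemma S_bound_neg (hδ : δ₂ ≤ δ₁) (z : L2Z) (hz : ∀ k : ℤ, 0 < k → z k = 0) :
    (∀ k : ℤ, 0 < k → (S hδ z) k = 0) ∧ ‖S hδ z‖ ≤ Real.exp (-δ₁) * ‖z‖ := by
  constructor
  · intro k hk
    rw [S_apply, hz (k + 1) (by omega), mul_zero]
  · apply norm_le_of_le _ z _ (Real.exp_pos _).le 1
    intro k
    rw [S_apply]
    rcases le_or_gt k (-1) with h | h
    · rw [norm_mul, Complex.norm_real, Real.norm_eq_abs, abs_of_pos (dd_pos δ₁ δ₂ k),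
        dd_of_neg h]
    · rw [hz (k + 1) (by omega)]
      simp [mul_nonneg (Real.exp_pos (-δ₁)).le (norm_nonneg _)]

/-- iterated bound for a CLM preserving a predicate -/
lemma pow_bound (A : L2Z →L[ℂ] L2Z) (P : L2Z → Prop) (C : ℝ) (hC : 0 ≤ C)
    (h : ∀ u, P u → P (A u) ∧ ‖A u‖ ≤ C * ‖u‖) :
    ∀ (n : ℕ) (u : L2Z), P u → P ((A ^ n) u) ∧ ‖(A ^ n) u‖ ≤ C ^ n * ‖u‖ := by
  intro n
  induction n with
  | zero => intro u hu; simpa using hu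
  | succ n ih =>
    intro u hu
    have h1 := ih u hu
    have h2 := h _ h1.1
    rw [pow_succ' A n, ContinuousLinearMap.mul_apply]
    refine ⟨h2.1, h2.2.trans ?_⟩
    calc C * ‖(A ^ n) u‖ ≤ C * (C ^ n * ‖u‖) := by
          exact mul_le_mul_of_nonneg_left h1.2 hC
      _ = C ^ (n + 1) * ‖u‖ := by ring

end Helper
namespace Helper

lemma norm_S_le {δ₁ δ₂ : ℝ} (hδ : δ₂ ≤ δ₁) (z : L2Z) :
    ‖S hδ z‖ ≤ Real.exp (-δ₂) * ‖z‖ :=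
  (S hδ).le_of_opNorm_le (LinearMap.mkContinuous_norm_le _ (Real.exp_pos _).le _) z

lemma norm_W_le' {δ₁ δ₂ : ℝ} (hδ : δ₂ ≤ δ₁) (z : L2Z) :
    ‖W hδ z‖ ≤ Real.exp δ₁ * ‖z‖ :=
  (W hδ).le_of_opNorm_le (LinearMap.mkContinuous_norm_le _ (Real.exp_pos _).le _) z

/-- Solve `A z - lam • z = v` when `A` contracts (relative to `lam`) on a class containing `v`. -/
lemma solve_backward (lam : ℂ) (A : L2Z →L[ℂ] L2Z)
    (P : L2Z → Prop) (C : ℝ) (hC : 0 ≤ C) (hCl : C < ‖lam‖)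
    (hA : ∀ u, P u → P (A u) ∧ ‖A u‖ ≤ C * ‖u‖)
    (v : L2Z) (hv : P v) :
    ∃ z, A z - lam • z = v := by
  have hlam0 : (0:ℝ) < ‖lam‖ := lt_of_le_of_lt hC hCl
  have hlam : lam ≠ 0 := by
    intro h; rw [h, norm_zero] at hlam0; exact lt_irrefl _ hlam0
  have hb : ∀ n : ℕ, ‖(A ^ n) v‖ ≤ C ^ n * ‖v‖ :=
    fun n => (pow_bound A P C hC hA n v hv).2
  have hsum : Summable (fun n : ℕ => lam⁻¹ ^ (n + 1) • ((A ^ n) v)) := by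
    apply Summable.of_norm_bounded (g := fun n => (‖lam‖⁻¹ * ‖v‖) * (C * ‖lam‖⁻¹) ^ n)
    · apply Summable.mul_left
      apply summable_geometric_of_lt_one (by positivity)
      rw [← div_eq_mul_inv, div_lt_one hlam0]
      exact hCl
    · intro n
      rw [norm_smul, norm_pow, norm_inv]
      calc ‖lam‖⁻¹ ^ (n + 1) * ‖(A ^ n) v‖
          ≤ ‖lam‖⁻¹ ^ (n + 1) * (C ^ n * ‖v‖) :=
            mul_le_mul_of_nonneg_left (hb n) (by positivity)
        _ = (‖lam‖⁻¹ * ‖v‖) * (C * ‖lam‖⁻¹) ^ n := by ring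
  set g := ∑' n : ℕ, lam⁻¹ ^ (n + 1) • ((A ^ n) v) with hg
  have hAg : A g = ∑' n : ℕ, lam⁻¹ ^ (n + 1) • ((A ^ (n + 1)) v) := by
    rw [hg, A.map_tsum hsum]
    congr 1; funext n
    rw [A.map_smul]
    congr 1
    rw [pow_succ' A n, ContinuousLinearMap.mul_apply]
  have hs' : Summable (fun n : ℕ => lam⁻¹ ^ n • ((A ^ n) v)) := by
    apply (hsum.const_smul lam).congr
    intro n
    rw [smul_smul]
    congr 1
    calc lam * lam⁻¹ ^ (n + 1) = (lam * lam⁻¹) * lam⁻¹ ^ n := by ring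
      _ = lam⁻¹ ^ n := by rw [mul_inv_cancel₀ hlam, one_mul]
  have hlg : lam • g = ∑' n : ℕ, lam⁻¹ ^ n • ((A ^ n) v) := by
    rw [hg, ← Summable.tsum_const_smul lam hsum]
    apply tsum_congr
    intro n
    rw [smul_smul]
    congr 1
    calc lam * lam⁻¹ ^ (n + 1) = (lam * lam⁻¹) * lam⁻¹ ^ n := by ring
      _ = lam⁻¹ ^ n := by rw [mul_inv_cancel₀ hlam, one_mul]
  have hzero := Summable.tsum_eq_zero_add hs'
  simp only [pow_zero, one_smul, pow_zero] at hzero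
  rw [ContinuousLinearMap.one_apply] at hzero
  -- hzero : ∑' n, lam⁻¹ ^ n • (A ^ n) v = v + ∑' n, lam⁻¹ ^ (n+1) • (A ^ (n+1)) v
  have key : lam • g = v + A g := by rw [hlg, hzero, hAg]
  refine ⟨-g, ?_⟩
  rw [map_neg, smul_neg, sub_neg_eq_add, key]
  abel

/-- Solve `A z - lam • z = v` using a right inverse `B` of `A` that contracts on a class
containing `v`. -/
lemma solve_forward (lam : ℂ) (A B : L2Z →L[ℂ] L2Z) (hAB : ∀ u, A (B u) = u)
    (P : L2Z → Prop) (C : ℝ) (hC : 0 ≤ C) (hCl : ‖lam‖ * C < 1)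
    (hB : ∀ u, P u → P (B u) ∧ ‖B u‖ ≤ C * ‖u‖)
    (v : L2Z) (hv : P v) :
    ∃ z, A z - lam • z = v := by
  have hb : ∀ n : ℕ, ‖(B ^ n) v‖ ≤ C ^ n * ‖v‖ :=
    fun n => (pow_bound B P C hC hB n v hv).2
  have hsum : Summable (fun n : ℕ => lam ^ n • ((B ^ (n + 1)) v)) := by
    apply Summable.of_norm_bounded (g := fun n => (C * ‖v‖) * (‖lam‖ * C) ^ n)
    · apply Summable.mul_left
      exact summable_geometric_of_lt_one (by positivity) hCl
    · intro n
      rw [norm_smul, norm_pow]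
      calc ‖lam‖ ^ n * ‖(B ^ (n + 1)) v‖
          ≤ ‖lam‖ ^ n * (C ^ (n + 1) * ‖v‖) :=
            mul_le_mul_of_nonneg_left (hb (n + 1)) (by positivity)
        _ = (C * ‖v‖) * (‖lam‖ * C) ^ n := by ring
  set h := ∑' n : ℕ, lam ^ n • ((B ^ (n + 1)) v) with hh
  have hAh : A h = ∑' n : ℕ, lam ^ n • ((B ^ n) v) := by
    rw [hh, A.map_tsum hsum]
    apply tsum_congr
    intro n
    rw [A.map_smul]
    congr 1
    rw [pow_succ' B n, ContinuousLinearMap.mul_apply, hAB]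
  have hq : Summable (fun n : ℕ => lam ^ n • ((B ^ n) v)) := by
    apply (summable_nat_add_iff 1).1
    apply (hsum.const_smul lam).congr
    intro n
    rw [smul_smul, ← pow_succ']
  have hzero := Summable.tsum_eq_zero_add hq
  simp only [pow_zero, one_smul] at hzero
  rw [ContinuousLinearMap.one_apply] at hzero
  have htail : ∑' n : ℕ, lam ^ (n + 1) • ((B ^ (n + 1)) v) = lam • h := by
    rw [hh, ← Summable.tsum_const_smul lam hsum]
    apply tsum_congr
    intro n
    rw [smul_smul, ← pow_succ']
  have key : A h = v + lam • h := by rw [hAh, hzero, ← htail]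
  exact ⟨h, by rw [key]; abel⟩

end Helper
namespace Helper

lemma exp_mul_exp_neg (a : ℝ) : Real.exp a * Real.exp (-a) = 1 := by
  rw [← Real.exp_add]; simp

/-- Master solving result for `W`. -/
lemma W_solve {δ₁ δ₂ : ℝ} (hδ : δ₂ ≤ δ₁) (lam : ℂ)
    (h₁ : ‖lam‖ ≠ Real.exp δ₁) (h₂ : ‖lam‖ ≠ Real.exp δ₂) (v : L2Z) :
    ∃ z, W hδ z - lam • z = v := by
  rcases h₂.lt_or_gt with hB | hgt2
  · -- ‖lam‖ < e^{δ₂} : forward series, no splitting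
    apply solve_forward lam (W hδ) (S hδ) (W_S hδ) (fun _ => True) (Real.exp (-δ₂))
      (Real.exp_pos _).le
    · calc ‖lam‖ * Real.exp (-δ₂) < Real.exp δ₂ * Real.exp (-δ₂) :=
            mul_lt_mul_of_pos_right hB (Real.exp_pos _)
        _ = 1 := exp_mul_exp_neg δ₂
    · exact fun u _ => ⟨trivial, norm_S_le hδ u⟩
    · trivial
  · rcases h₁.lt_or_gt with hmid | hA
    · -- e^{δ₂} < ‖lam‖ < e^{δ₁} : split
      set vpos : L2Z := ⟨fun k => if k ≤ 0 then 0 else v k,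
        memℓp_of_le v 1 0 (fun k => by
          split_ifs <;> simp [norm_nonneg])⟩ with hvpos
      set vneg : L2Z := ⟨fun k => if k ≤ 0 then v k else 0,
        memℓp_of_le v 1 0 (fun k => by
          split_ifs <;> simp [norm_nonneg])⟩ with hvneg
      have hsplit : vneg + vpos = v := by
        apply Subtype.ext; funext k
        simp only [lp.coeFn_add, Pi.add_apply, hvpos, hvneg]
        split_ifs <;> simp
      obtain ⟨z₂, hz₂⟩ := solve_backward lam (W hδ)
        (fun z => ∀ k ≤ 0, z k = 0) (Real.exp δ₂) (Real.exp_pos _).le hgt2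
        (fun u hu => W_bound_pos hδ u hu) vpos
        (fun k hk => by simp only [hvpos]; rw [if_pos hk])
      obtain ⟨z₁, hz₁⟩ := solve_forward lam (W hδ) (S hδ) (W_S hδ)
        (fun z => ∀ k : ℤ, 0 < k → z k = 0) (Real.exp (-δ₁)) (Real.exp_pos _).le
        (by
          calc ‖lam‖ * Real.exp (-δ₁) < Real.exp δ₁ * Real.exp (-δ₁) :=
                mul_lt_mul_of_pos_right hmid (Real.exp_pos _)
            _ = 1 := exp_mul_exp_neg δ₁)
        (fun u hu => S_bound_neg hδ u hu) vneg
        (fun k hk => by simp only [hvneg]; rw [if_neg (by omega)])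
      refine ⟨z₁ + z₂, ?_⟩
      calc W hδ (z₁ + z₂) - lam • (z₁ + z₂)
          = (W hδ z₁ - lam • z₁) + (W hδ z₂ - lam • z₂) := by
            rw [map_add, smul_add]; abel
        _ = vneg + vpos := by rw [hz₁, hz₂]
        _ = v := hsplit
    · -- e^{δ₁} < ‖lam‖ : backward series, no splitting
      apply solve_backward lam (W hδ) (fun _ => True) (Real.exp δ₁)
        (Real.exp_pos _).le hA
      · exact fun u _ => ⟨trivial, norm_W_le' hδ u⟩
      · trivial

end Helper
namespace WeightedL2

variable {δ₁ δ₂ : ℝ}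

lemma wmul_apply (x : ℤ → ℂ) (k : ℤ) : wmul δ₁ δ₂ x k = (w δ₁ δ₂ k : ℂ) * x k := rfl

lemma toLp_apply (x : space δ₁ δ₂) (k : ℤ) :
    (toLp δ₁ δ₂ x) k = (w δ₁ δ₂ k : ℂ) * x.1 k := rfl

lemma toLp_surjective (δ₁ δ₂ : ℝ) : Function.Surjective (toLp δ₁ δ₂) := by
  intro f
  have hw : ∀ k, (w δ₁ δ₂ k : ℂ) ≠ 0 := fun k => by
    exact_mod_cast (w_pos δ₁ δ₂ k).ne'
  have hx : wmul δ₁ δ₂ (fun k => (w δ₁ δ₂ k : ℂ)⁻¹ * f k) = ⇑f := by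
    funext k
    rw [wmul_apply, ← mul_assoc, mul_inv_cancel₀ (hw k), one_mul]
  refine ⟨⟨fun k => (w δ₁ δ₂ k : ℂ)⁻¹ * f k, ?_⟩, ?_⟩
  · show Memℓp _ 2
    rw [hx]; exact lp.memℓp f
  · apply Subtype.ext
    show wmul δ₁ δ₂ _ = ⇑f
    exact hx

lemma w_eq_cc_mul (δ₁ δ₂ : ℝ) (k : ℤ) :
    w δ₁ δ₂ k = Helper.cc δ₁ δ₂ k * w δ₁ δ₂ (k - 1) := by
  unfold w Helper.cc
  rcases le_or_gt k 0 with h | h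
  · rw [if_pos h, if_pos h, if_pos (by omega : k - 1 ≤ 0), ← Real.exp_add]
    congr 1; push_cast; ring
  · rw [if_neg (by omega), if_neg (by omega)]
    rcases le_or_gt (k - 1) 0 with h' | h'
    · have hk1 : k = 1 := by omega
      subst hk1
      rw [if_pos (by omega : (1:ℤ) - 1 ≤ 0)]
      norm_num
    · rw [if_neg (by omega), ← Real.exp_add]
      congr 1; push_cast; ring

end WeightedL2

open WeightedL2 in
/-- Assume `δ₂ ≤ δ₁` and let `λ` be a complex number with `|λ|` different
from `e^{δ₁}` and from `e^{δ₂}`. Then for every positive integer `m` the operator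
`(T − λI)^m : ℓ²_{δ₁,δ₂} → ℓ²_{δ₁,δ₂}` is surjective. -/
theorem surjective_shift_sub_smul_id_pow (δ₁ δ₂ : ℝ) (hδ : δ₂ ≤ δ₁)
    (T : space δ₁ δ₂ →L[ℂ] space δ₁ δ₂)
    (hT : ∀ (x : space δ₁ δ₂) (k : ℤ), (T x : ℤ → ℂ) k = (x : ℤ → ℂ) (k - 1))
    (lam : ℂ) (h₁ : ‖lam‖ ≠ Real.exp δ₁) (h₂ : ‖lam‖ ≠ Real.exp δ₂)
    (m : ℕ) (hm : 0 < m) :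
    Function.Surjective ⇑((T - lam • 1) ^ m) := by
  have hsurj : Function.Surjective ⇑(T - lam • 1) := by
    intro y
    -- conjugate `T` to the weighted shift `W` on `ℓ²`
    have hconj : ∀ x : space δ₁ δ₂,
        toLp δ₁ δ₂ (T x) = Helper.W hδ (toLp δ₁ δ₂ x) := by
      intro x
      apply Subtype.ext; funext k
      rw [toLp_apply, Helper.W_apply, toLp_apply]
      show (w δ₁ δ₂ k : ℂ) * (T x : ℤ → ℂ) k = _
      rw [hT x k, w_eq_cc_mul δ₁ δ₂ k]
      push_cast
      ring
    have hn₁ : ‖lam‖ ≠ Real.exp δ₁ := by exact h₁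
    have hn₂ : ‖lam‖ ≠ Real.exp δ₂ := by exact h₂
    obtain ⟨z, hz⟩ := Helper.W_solve hδ lam hn₁ hn₂ (toLp δ₁ δ₂ y)
    obtain ⟨x, hx⟩ := toLp_surjective δ₁ δ₂ z
    refine ⟨x, ?_⟩
    apply toLp_injective δ₁ δ₂
    have happ : (T - lam • 1) x = T x - lam • x := by
      rw [ContinuousLinearMap.sub_apply, ContinuousLinearMap.smul_apply,
        ContinuousLinearMap.one_apply]
    rw [happ, map_sub, map_smul, hconj x, hx, hz]
  clear hm
  induction m with
  | zero =>
    intro y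
    exact ⟨y, by rw [pow_zero, ContinuousLinearMap.one_apply]⟩
  | succ n ih =>
    intro y
    obtain ⟨u, hu⟩ := ih y
    obtain ⟨x, hx⟩ := hsurj u
    refine ⟨x, ?_⟩
    rw [pow_succ, ContinuousLinearMap.mul_apply, hx, hu]
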